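/- arXiv:1408.1300 — 4 statements merged into one kernel-verified Lean document; each statement's English description precedes it below -/
import Mathlib

section
/- For every a ∈ [0,1], every x in the open unit ball B ⊂ ℝ^n (n ≥ 2) and all y, z ∈ ℝ^n, the triangle inequality F_a(x, y + z) ≤ F_a(x,y) + F_a(x,z) holds. -/
open Metric

/-- The Funk-type metric `F_a` on the unit ball of `ℝ^n`. -/
noncomputable def Fa (n : ℕ) (a : ℝ) (x y : EuclideanSpace ℝ (Fin n)) : ℝ :=
  (Real.sqrt (‖y‖ ^ 2 - (‖x‖ ^ 2 * ‖y‖ ^ 2 - (inner ℝ x y : ℝ) ^ 2)) + a * (inner ℝ x y : ℝ)) /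
    (1 - ‖x‖ ^ 2)

open scoped RealInnerProductSpace

section

variable {E : Type*} [NormedAddCommGroup E] [InnerProductSpace ℝ E]

/-- `√(c‖y‖² + ⟪x, y⟫²)` is the `L²` norm of the image of `y` under the linear map
`y ↦ (√c • y, ⟪x, y⟫)` into `E × ℝ`, hence subadditive in `y`. -/
theorem sqrt_mul_norm_sq_add_inner_sq_add_le {c : ℝ} (hc : 0 ≤ c) (x y z : E) :
    √(c * ‖y + z‖ ^ 2 + ⟪x, y + z⟫ ^ 2) ≤
      √(c * ‖y‖ ^ 2 + ⟪x, y⟫ ^ 2) + √(c * ‖z‖ ^ 2 + ⟪x, z⟫ ^ 2) := by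
  let v : E → WithLp 2 (E × ℝ) := fun w => WithLp.toLp 2 (√c • w, ⟪x, w⟫)
  have norm_v (w : E) : ‖v w‖ = √(c * ‖w‖ ^ 2 + ⟪x, w⟫ ^ 2) := by
    rw [WithLp.prod_norm_eq_of_L2]
    simp [v, norm_smul, mul_pow, Real.sq_sqrt hc, sq_abs]
  have v_add : v (y + z) = v y + v z := by
    simp [v, inner_add_right, smul_add, ← WithLp.toLp_add]
  rw [← norm_v, ← norm_v, ← norm_v, v_add]
  exact norm_add_le (v y) (v z)

end

theorem Fa_eq (n : ℕ) (a : ℝ) (x y : EuclideanSpace ℝ (Fin n)) :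
    Fa n a x y = (√((1 - ‖x‖ ^ 2) * ‖y‖ ^ 2 + ⟪x, y⟫ ^ 2) + a * ⟪x, y⟫) / (1 - ‖x‖ ^ 2) := by
  rw [Fa]
  ring_nf

theorem stmt_1_general (n : ℕ) (a : ℝ)
    (x : EuclideanSpace ℝ (Fin n)) (hx : x ∈ ball (0 : EuclideanSpace ℝ (Fin n)) 1)
    (y z : EuclideanSpace ℝ (Fin n)) :
    Fa n a x (y + z) ≤ Fa n a x y + Fa n a x z := by
  have hc : 0 < 1 - ‖x‖ ^ 2 := by
    rw [mem_ball_zero_iff] at hx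
    nlinarith [norm_nonneg x]
  rw [Fa_eq, Fa_eq, Fa_eq, ← add_div]
  refine div_le_div_of_nonneg_right ?_ hc.le
  have key := sqrt_mul_norm_sq_add_inner_sq_add_le hc.le x y z
  rw [inner_add_right] at key ⊢
  linarith

theorem stmt_1 (n : ℕ) (hn : 2 ≤ n) (a : ℝ) (ha : a ∈ Set.Icc (0 : ℝ) 1)
    (x : EuclideanSpace ℝ (Fin n)) (hx : x ∈ ball (0 : EuclideanSpace ℝ (Fin n)) 1)
    (y z : EuclideanSpace ℝ (Fin n)) :
    Fa n a x (y + z) ≤ Fa n a x y + Fa n a x z :=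
  stmt_1_general n a x hx y z
end

section
/- For every a ∈ [0,1], every x in the open unit ball B ⊂ ℝ^n (n ≥ 2) and every α ∈ ℝ^n, the supremum over nonzero y ∈ ℝ^n of ⟨α,y⟩ / F_a(x,y) equals F_a^*(x,α) = [√((1−|x|²)(1−a²|x|²)|α|² − (1−a²)(1−|x|²)⟨x,α⟩²) − a(1−|x|²)⟨x,α⟩] / (1 − a²|x|²). -/
open Metric

/-- The polar transform (co-metric) of the Funk-type metric `F_a`. -/
noncomputable def FaStar (n : ℕ) (a : ℝ) (x y : EuclideanSpace ℝ (Fin n)) : ℝ :=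
  (Real.sqrt ((1 - ‖x‖ ^ 2) * (1 - a ^ 2 * ‖x‖ ^ 2) * ‖y‖ ^ 2 -
      (1 - a ^ 2) * (1 - ‖x‖ ^ 2) * (inner ℝ x y : ℝ) ^ 2) -
    a * (1 - ‖x‖ ^ 2) * (inner ℝ x y : ℝ)) / (1 - a ^ 2 * ‖x‖ ^ 2)

/-! With `σ = √(1 - ‖x‖²)`, the linear map `T y = σ • y + (⟪x, y⟫ / (1 + σ)) • x` satisfies
`‖T y‖² = (1 - ‖x‖²) ‖y‖² + ⟪x, y⟫²` and `⟪x, T y⟫ = ⟪x, y⟫`, so in the variable `z = T y` the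
metric `F_a(x, ·)` becomes the Randers norm `z ↦ (‖z‖ + ⟪a • x, z⟫) / (1 - ‖x‖²)`.
The dual of a Randers norm `‖z‖ + ⟪b, z⟫` with `‖b‖ < 1` at `α` is the number `D ≥ 0` with
`‖α - D • b‖ = D`: Cauchy–Schwarz gives `⟪α, z⟫ = ⟪α - D • b, z⟫ + D ⟪b, z⟫ ≤ D (‖z‖ + ⟪b, z⟫)`,
with equality at `z = α - D • b`. -/

open RealInnerProductSpace

section Randers

variable {E : Type*} [NormedAddCommGroup E] [InnerProductSpace ℝ E]

/-- The dual norm of the Randers norm `z ↦ ‖z‖ + ⟪b, z⟫`, written as the nonnegative root `D` of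
`(1 - ‖b‖²) D² + 2 ⟪α, b⟫ D = ‖α‖²`. -/
noncomputable def randersDual (b α : E) : ℝ :=
  (√((1 - ‖b‖ ^ 2) * ‖α‖ ^ 2 + ⟪α, b⟫ ^ 2) - ⟪α, b⟫) / (1 - ‖b‖ ^ 2)

variable {b : E}

lemma randersDual_nonneg (hb : ‖b‖ < 1) (α : E) : 0 ≤ randersDual b α := by
  have hgap : 0 < 1 - ‖b‖ ^ 2 := by nlinarith [norm_nonneg b]
  have hβ : ⟪α, b⟫ ≤ √((1 - ‖b‖ ^ 2) * ‖α‖ ^ 2 + ⟪α, b⟫ ^ 2) :=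
    (le_abs_self _).trans <| Real.abs_le_sqrt (by nlinarith [sq_nonneg ‖α‖])
  exact div_nonneg (sub_nonneg.mpr hβ) hgap.le

lemma randersDual_zero (b : E) : randersDual b 0 = 0 := by
  simp [randersDual]

lemma norm_sub_randersDual_smul (hb : ‖b‖ < 1) (α : E) :
    ‖α - randersDual b α • b‖ = randersDual b α := by
  set D := randersDual b α
  have hgap : 0 < 1 - ‖b‖ ^ 2 := by nlinarith [norm_nonneg b]
  have hroot : (1 - ‖b‖ ^ 2) * D ^ 2 + 2 * ⟪α, b⟫ * D = ‖α‖ ^ 2 := by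
    have hs := Real.sq_sqrt (by nlinarith [sq_nonneg ‖α‖] :
      0 ≤ (1 - ‖b‖ ^ 2) * ‖α‖ ^ 2 + ⟪α, b⟫ ^ 2)
    have hD : (1 - ‖b‖ ^ 2) * D + ⟪α, b⟫ = √((1 - ‖b‖ ^ 2) * ‖α‖ ^ 2 + ⟪α, b⟫ ^ 2) := by
      simp only [D, randersDual]
      field_simp
      ring
    refine mul_left_cancel₀ hgap.ne' ?_
    linear_combination ((1 - ‖b‖ ^ 2) * D + ⟪α, b⟫ + √((1 - ‖b‖ ^ 2) * ‖α‖ ^ 2 + ⟪α, b⟫ ^ 2)) * hD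
      + hs
  rw [← sq_eq_sq₀ (norm_nonneg _) (randersDual_nonneg hb α), norm_sub_sq_real, norm_smul,
    real_inner_smul_right, Real.norm_of_nonneg (randersDual_nonneg hb α)]
  linear_combination -hroot

lemma norm_add_inner_pos (hb : ‖b‖ < 1) {z : E} (hz : z ≠ 0) : 0 < ‖z‖ + ⟪b, z⟫ := by
  have hz' : 0 < ‖z‖ := norm_pos_iff.mpr hz
  have : -⟪b, z⟫ ≤ ‖b‖ * ‖z‖ := (neg_le_abs _).trans (abs_real_inner_le_norm b z)
  nlinarith

lemma inner_le_randersDual_mul (hb : ‖b‖ < 1) (α z : E) :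
    ⟪α, z⟫ ≤ randersDual b α * (‖z‖ + ⟪b, z⟫) := by
  set D := randersDual b α
  calc ⟪α, z⟫ = ⟪α - D • b, z⟫ + D * ⟪b, z⟫ := by
        rw [inner_sub_left, real_inner_smul_left]; ring
    _ ≤ ‖α - D • b‖ * ‖z‖ + D * ⟪b, z⟫ := by gcongr; exact real_inner_le_norm _ _
    _ = D * (‖z‖ + ⟪b, z⟫) := by rw [norm_sub_randersDual_smul hb]; ring

lemma exists_inner_eq_randersDual_mul [Nontrivial E] (hb : ‖b‖ < 1) (α : E) :
    ∃ z : E, z ≠ 0 ∧ ⟪α, z⟫ = randersDual b α * (‖z‖ + ⟪b, z⟫) := by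
  rcases eq_or_ne α 0 with rfl | hα
  · obtain ⟨z, hz⟩ := exists_ne (0 : E)
    exact ⟨z, hz, by simp [randersDual_zero]⟩
  set D := randersDual b α
  have hnorm : ‖α - D • b‖ = D := norm_sub_randersDual_smul hb α
  refine ⟨α - D • b, fun h0 => hα ?_, ?_⟩
  · have hD : D = 0 := by rw [← hnorm, h0, norm_zero]
    simpa [hD] using h0
  · calc ⟪α, α - D • b⟫ = ⟪α - D • b, α - D • b⟫ + D * ⟪b, α - D • b⟫ := by
          rw [inner_sub_left _ _ (α - D • b), real_inner_smul_left]; ring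
      _ = D * (‖α - D • b‖ + ⟪b, α - D • b⟫) := by
          rw [real_inner_self_eq_norm_sq, hnorm]; ring

theorem isLUB_randersDual [Nontrivial E] (hb : ‖b‖ < 1) (α : E) :
    IsLUB {r : ℝ | ∃ z : E, z ≠ 0 ∧ r = ⟪α, z⟫ / (‖z‖ + ⟪b, z⟫)} (randersDual b α) := by
  refine ⟨?_, fun r hr => ?_⟩
  · rintro r ⟨z, hz, rfl⟩
    exact (div_le_iff₀ (norm_add_inner_pos hb hz)).mpr (inner_le_randersDual_mul hb α z)
  · obtain ⟨z, hz, heq⟩ := exists_inner_eq_randersDual_mul hb α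
    exact hr ⟨z, hz, by rw [heq, mul_div_cancel_right₀ _ (norm_add_inner_pos hb hz).ne']⟩

end Randers

lemma eq_one_sub_sqrt_one_sub_sq {t : ℝ} (ht : t ≤ 1) : t = 1 - √(1 - t) ^ 2 := by
  rw [Real.sq_sqrt (by linarith)]
  ring

section FunkSqrt

variable {E : Type*} [NormedAddCommGroup E] [InnerProductSpace ℝ E] {x : E}

/-- A square root of the positive operator `y ↦ (1 - ‖x‖²) • y + ⟪x, y⟫ • x`, whose quadratic
form is the radicand in `F_a`. -/
noncomputable def funkSqrt (x y : E) : E :=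
  √(1 - ‖x‖ ^ 2) • y + (⟪x, y⟫ / (1 + √(1 - ‖x‖ ^ 2))) • x

noncomputable def funkSqrtInv (x y : E) : E :=
  (√(1 - ‖x‖ ^ 2))⁻¹ • (y - (⟪x, y⟫ / (1 + √(1 - ‖x‖ ^ 2))) • x)

lemma funkSqrt_zero (x : E) : funkSqrt x 0 = 0 := by
  simp [funkSqrt]

lemma inner_funkSqrt_comm (x u y : E) : ⟪u, funkSqrt x y⟫ = ⟪funkSqrt x u, y⟫ := by
  simp only [funkSqrt, inner_add_left, inner_add_right, real_inner_smul_left,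
    real_inner_smul_right, real_inner_comm u x]
  ring

lemma inner_funkSqrt_self (hx : ‖x‖ ≤ 1) (y : E) : ⟪x, funkSqrt x y⟫ = ⟪x, y⟫ := by
  simp only [funkSqrt, inner_add_right, real_inner_smul_right, real_inner_self_eq_norm_sq]
  have hx2 := eq_one_sub_sqrt_one_sub_sq (by nlinarith [norm_nonneg x] : ‖x‖ ^ 2 ≤ 1)
  have hσ := Real.sqrt_nonneg (1 - ‖x‖ ^ 2)
  generalize √(1 - ‖x‖ ^ 2) = σ at hx2 hσ ⊢
  rw [hx2]
  field_simp
  ring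

lemma norm_funkSqrt_sq (hx : ‖x‖ ≤ 1) (y : E) :
    ‖funkSqrt x y‖ ^ 2 = (1 - ‖x‖ ^ 2) * ‖y‖ ^ 2 + ⟪x, y⟫ ^ 2 := by
  rw [← real_inner_self_eq_norm_sq]
  nth_rw 1 [funkSqrt]
  rw [inner_add_left, real_inner_smul_left, real_inner_smul_left, inner_funkSqrt_self hx]
  simp only [funkSqrt, inner_add_right, real_inner_smul_right, real_inner_self_eq_norm_sq,
    real_inner_comm x y]
  have hx2 := eq_one_sub_sqrt_one_sub_sq (by nlinarith [norm_nonneg x] : ‖x‖ ^ 2 ≤ 1)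
  have hσ := Real.sqrt_nonneg (1 - ‖x‖ ^ 2)
  generalize √(1 - ‖x‖ ^ 2) = σ at hx2 hσ ⊢
  rw [hx2]
  field_simp
  ring

lemma funkSqrt_ne_zero (hx : ‖x‖ < 1) {y : E} (hy : y ≠ 0) : funkSqrt x y ≠ 0 := by
  have hpos : 0 < ‖funkSqrt x y‖ ^ 2 := by
    rw [norm_funkSqrt_sq hx.le]
    have : 0 < ‖y‖ := norm_pos_iff.mpr hy
    have : 0 < 1 - ‖x‖ ^ 2 := by nlinarith [norm_nonneg x]
    positivity
  intro h
  simp [h] at hpos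

lemma inner_funkSqrtInv_self (hx : ‖x‖ < 1) (y : E) : ⟪x, funkSqrtInv x y⟫ = ⟪x, y⟫ := by
  simp only [funkSqrtInv, real_inner_smul_right, inner_sub_right, real_inner_self_eq_norm_sq]
  have hx2 := eq_one_sub_sqrt_one_sub_sq (by nlinarith [norm_nonneg x] : ‖x‖ ^ 2 ≤ 1)
  have hσ : 0 < √(1 - ‖x‖ ^ 2) := Real.sqrt_pos.mpr (by nlinarith [norm_nonneg x])
  generalize √(1 - ‖x‖ ^ 2) = σ at hx2 hσ ⊢
  rw [hx2]
  field_simp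
  ring

lemma funkSqrt_funkSqrtInv (hx : ‖x‖ < 1) (y : E) : funkSqrt x (funkSqrtInv x y) = y := by
  have hσ : 0 < √(1 - ‖x‖ ^ 2) := Real.sqrt_pos.mpr (by nlinarith [norm_nonneg x])
  rw [funkSqrt, inner_funkSqrtInv_self hx, funkSqrtInv, smul_smul, mul_inv_cancel₀ hσ.ne',
    one_smul, sub_add_cancel]

lemma norm_funkSqrtInv_sq (hx : ‖x‖ < 1) (y : E) :
    (1 - ‖x‖ ^ 2) * ‖funkSqrtInv x y‖ ^ 2 = ‖y‖ ^ 2 - ⟪x, y⟫ ^ 2 := by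
  have h := norm_funkSqrt_sq hx.le (funkSqrtInv x y)
  rw [funkSqrt_funkSqrtInv hx, inner_funkSqrtInv_self hx] at h
  linarith

end FunkSqrt

section Funk

variable {n : ℕ} {a : ℝ} {x : EuclideanSpace ℝ (Fin n)}

lemma Fa_eq_funkSqrt (hx : ‖x‖ ≤ 1) (y : EuclideanSpace ℝ (Fin n)) :
    Fa n a x y = (‖funkSqrt x y‖ + ⟪a • x, funkSqrt x y⟫) / (1 - ‖x‖ ^ 2) := by
  rw [Fa, real_inner_smul_left, inner_funkSqrt_self hx,
    ← Real.sqrt_sq (norm_nonneg (funkSqrt x y)), norm_funkSqrt_sq hx]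
  ring_nf

lemma inner_div_Fa_eq (hx : ‖x‖ < 1) (α y : EuclideanSpace ℝ (Fin n)) :
    ⟪α, y⟫ / Fa n a x y = ⟪(1 - ‖x‖ ^ 2) • funkSqrtInv x α, funkSqrt x y⟫ /
      (‖funkSqrt x y‖ + ⟪a • x, funkSqrt x y⟫) := by
  rw [Fa_eq_funkSqrt hx.le, real_inner_smul_left (funkSqrtInv x α),
    inner_funkSqrt_comm x (funkSqrtInv x α), funkSqrt_funkSqrtInv hx,
    div_div_eq_mul_div, mul_comm]

lemma FaStar_eq_randersDual (hx : ‖x‖ < 1) (α : EuclideanSpace ℝ (Fin n)) :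
    FaStar n a x α = randersDual (a • x) ((1 - ‖x‖ ^ 2) • funkSqrtInv x α) := by
  have h := norm_funkSqrtInv_sq hx α
  rw [FaStar, randersDual, norm_smul, norm_smul, mul_pow, mul_pow, real_inner_smul_left,
    real_inner_smul_right, real_inner_comm x (funkSqrtInv x α), inner_funkSqrtInv_self hx]
  simp only [Real.norm_eq_abs, sq_abs]
  congr 2
  · congr 1
    linear_combination (-(1 - a ^ 2 * ‖x‖ ^ 2) * (1 - ‖x‖ ^ 2)) * h
  · ring

lemma setOf_inner_div_Fa_eq (hx : ‖x‖ < 1) (α : EuclideanSpace ℝ (Fin n)) :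
    {r : ℝ | ∃ y, y ≠ 0 ∧ r = ⟪α, y⟫ / Fa n a x y} =
      {r : ℝ | ∃ z, z ≠ 0 ∧ r = ⟪(1 - ‖x‖ ^ 2) • funkSqrtInv x α, z⟫ / (‖z‖ + ⟪a • x, z⟫)} := by
  ext r
  constructor
  · rintro ⟨y, hy, rfl⟩
    exact ⟨funkSqrt x y, funkSqrt_ne_zero hx hy, inner_div_Fa_eq hx α y⟩
  · rintro ⟨z, hz, rfl⟩
    refine ⟨funkSqrtInv x z, fun h => hz ?_, ?_⟩
    · rw [← funkSqrt_funkSqrtInv hx z, h, funkSqrt_zero]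
    · rw [inner_div_Fa_eq hx, funkSqrt_funkSqrtInv hx]

end Funk

theorem stmt_2 (n : ℕ) (hn : 2 ≤ n) (a : ℝ) (ha : a ∈ Set.Icc (0 : ℝ) 1)
    (x : EuclideanSpace ℝ (Fin n)) (hx : x ∈ ball (0 : EuclideanSpace ℝ (Fin n)) 1)
    (α : EuclideanSpace ℝ (Fin n)) :
    IsLUB {r : ℝ | ∃ y : EuclideanSpace ℝ (Fin n), y ≠ 0 ∧ r = (inner ℝ α y : ℝ) / Fa n a x y}
      (FaStar n a x α) := by
  have hx' : ‖x‖ < 1 := mem_ball_zero_iff.mp hx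
  have hb : ‖a • x‖ < 1 := by
    rw [norm_smul, Real.norm_of_nonneg ha.1]
    exact (mul_le_of_le_one_left (norm_nonneg x) ha.2).trans_lt hx'
  have : Nonempty (Fin n) := ⟨⟨0, by omega⟩⟩
  rw [setOf_inner_div_Fa_eq hx', FaStar_eq_randersDual hx']
  exact isLUB_randersDual hb _
end

section
/- For every a ∈ [0,1] and every x in the open unit ball B ⊂ ℝ^n (n ≥ 2), the supremum over nonzero y ∈ ℝ^n of the ratio F_a(x,y)/F_a(x,−y) equals (1 + a|x|)/(1 − a|x|). -/
/-!
Write `S = √(|y|² − (|x|²|y|² − ⟨x,y⟩²))` and `t = ⟨x,y⟩`. Then `F_a(x,±y) = (S ± a t)/(1 − |x|²)`,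
so the ratio is `(S + a t)/(S − a t)`, an increasing function of `a t / S`. Since
`S² = |y|²(1 − |x|²) + t²`, Cauchy–Schwarz gives `t ≤ |x| S`, so the ratio is at most
`(1 + a|x|)/(1 − a|x|)`; equality holds when `t = |x||y|` (e.g. `y = x`), for then `S = |y|`.
-/

open Metric

open scoped RealInnerProductSpace

section FunkRoot

variable {E : Type*} [NormedAddCommGroup E] [InnerProductSpace ℝ E] {x y : E}

noncomputable def funkRoot (x y : E) : ℝ :=
  √(‖y‖ ^ 2 - (‖x‖ ^ 2 * ‖y‖ ^ 2 - ⟪x, y⟫ ^ 2))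

lemma funkRoot_neg_right (x y : E) : funkRoot x (-y) = funkRoot x y := by
  simp [funkRoot, inner_neg_right]

lemma sq_funkRoot (hx : ‖x‖ ≤ 1) : funkRoot x y ^ 2 = ‖y‖ ^ 2 * (1 - ‖x‖ ^ 2) + ⟪x, y⟫ ^ 2 := by
  have hx2 : ‖x‖ ^ 2 ≤ 1 := by nlinarith [norm_nonneg x]
  rw [funkRoot, Real.sq_sqrt (by nlinarith [mul_nonneg (sq_nonneg ‖y‖) (sub_nonneg.2 hx2)])]
  ring

lemma abs_inner_lt_funkRoot (hx : ‖x‖ < 1) (hy : y ≠ 0) : |⟪x, y⟫| < funkRoot x y := by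
  have hx2 : ‖x‖ ^ 2 < 1 := by nlinarith [norm_nonneg x]
  have hy2 : 0 < ‖y‖ ^ 2 := by positivity
  refine abs_lt_of_sq_lt_sq ?_ (Real.sqrt_nonneg _)
  rw [sq_funkRoot hx.le]
  nlinarith

lemma inner_le_norm_mul_funkRoot (hx : ‖x‖ ≤ 1) : ⟪x, y⟫ ≤ ‖x‖ * funkRoot x y := by
  have hcs : ⟪x, y⟫ ^ 2 ≤ (‖x‖ * ‖y‖) ^ 2 := by
    rw [← sq_abs]
    exact pow_le_pow_left₀ (abs_nonneg _) (abs_real_inner_le_norm x y) 2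
  have hx2 : ‖x‖ ^ 2 ≤ 1 := by nlinarith [norm_nonneg x]
  refine le_of_sq_le_sq ?_ (mul_nonneg (norm_nonneg x) (Real.sqrt_nonneg _))
  rw [mul_pow, sq_funkRoot hx]
  nlinarith [mul_le_mul_of_nonneg_left hcs (sub_nonneg.2 hx2)]

lemma funkRoot_of_inner_eq (h : ⟪x, y⟫ = ‖x‖ * ‖y‖) : funkRoot x y = ‖y‖ := by
  rw [funkRoot, h, show ‖y‖ ^ 2 - (‖x‖ ^ 2 * ‖y‖ ^ 2 - (‖x‖ * ‖y‖) ^ 2) = ‖y‖ ^ 2 by ring,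
    Real.sqrt_sq (norm_nonneg y)]

lemma exists_ne_zero_inner_eq_norm_mul_norm [Nontrivial E] (x : E) :
    ∃ y : E, y ≠ 0 ∧ ⟪x, y⟫ = ‖x‖ * ‖y‖ := by
  rcases eq_or_ne x 0 with rfl | hx
  · obtain ⟨y, hy⟩ := exists_ne (0 : E)
    exact ⟨y, hy, by simp⟩
  · exact ⟨x, hx, by rw [real_inner_self_eq_norm_sq, sq]⟩

end FunkRoot

section Ratio

variable {n : ℕ} {a : ℝ} {x y : EuclideanSpace ℝ (Fin n)}

lemma Fa_div_Fa_neg (hx : ‖x‖ < 1) :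
    Fa n a x y / Fa n a x (-y) = (funkRoot x y + a * ⟪x, y⟫) / (funkRoot x y - a * ⟪x, y⟫) := by
  have hx2 : 1 - ‖x‖ ^ 2 ≠ 0 := by nlinarith [norm_nonneg x]
  have hneg : Fa n a x (-y) = (funkRoot x y - a * ⟪x, y⟫) / (1 - ‖x‖ ^ 2) := by
    rw [← funkRoot_neg_right x y]
    simp only [Fa, funkRoot, norm_neg, inner_neg_right]
    ring
  rw [hneg, Fa, div_div_div_cancel_right₀ hx2]
  rfl

lemma Fa_div_Fa_neg_le (ha0 : 0 ≤ a) (ha1 : a ≤ 1) (hx : ‖x‖ < 1) (hy : y ≠ 0) :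
    Fa n a x y / Fa n a x (-y) ≤ (1 + a * ‖x‖) / (1 - a * ‖x‖) := by
  have hax : a * ‖x‖ < 1 := by nlinarith [norm_nonneg x]
  have hat : a * ⟪x, y⟫ < funkRoot x y :=
    calc a * ⟪x, y⟫ ≤ a * |⟪x, y⟫| := mul_le_mul_of_nonneg_left (le_abs_self _) ha0
      _ ≤ |⟪x, y⟫| := mul_le_of_le_one_left (abs_nonneg _) ha1
      _ < funkRoot x y := abs_inner_lt_funkRoot hx hy
  rw [Fa_div_Fa_neg hx, div_le_div_iff₀ (by linarith) (by linarith)]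
  nlinarith [mul_le_mul_of_nonneg_left (inner_le_norm_mul_funkRoot (y := y) hx.le) ha0]

lemma Fa_div_Fa_neg_of_inner_eq (hx : ‖x‖ < 1) (hy : y ≠ 0) (hxy : ⟪x, y⟫ = ‖x‖ * ‖y‖) :
    Fa n a x y / Fa n a x (-y) = (1 + a * ‖x‖) / (1 - a * ‖x‖) := by
  rw [Fa_div_Fa_neg hx, funkRoot_of_inner_eq hxy, hxy,
    show ‖y‖ + a * (‖x‖ * ‖y‖) = ‖y‖ * (1 + a * ‖x‖) by ring,
    show ‖y‖ - a * (‖x‖ * ‖y‖) = ‖y‖ * (1 - a * ‖x‖) by ring,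
    mul_div_mul_left _ _ (norm_ne_zero_iff.2 hy)]

end Ratio

theorem stmt_3 (n : ℕ) (hn : 2 ≤ n) (a : ℝ) (ha : a ∈ Set.Icc (0 : ℝ) 1)
    (x : EuclideanSpace ℝ (Fin n)) (hx : x ∈ ball (0 : EuclideanSpace ℝ (Fin n)) 1) :
    IsLUB {r : ℝ | ∃ y : EuclideanSpace ℝ (Fin n), y ≠ 0 ∧ r = Fa n a x y / Fa n a x (-y)}
      ((1 + a * ‖x‖) / (1 - a * ‖x‖)) := by
  rw [mem_ball, dist_zero_right] at hx
  have : Nontrivial (EuclideanSpace ℝ (Fin n)) :=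
    Module.nontrivial_of_finrank_pos (by rw [finrank_euclideanSpace_fin]; omega)
  refine ⟨?_, fun r hr => hr ?_⟩
  · rintro r ⟨y, hy, rfl⟩
    exact Fa_div_Fa_neg_le ha.1 ha.2 hx hy
  · obtain ⟨y, hy, hxy⟩ := exists_ne_zero_inner_eq_norm_mul_norm x
    exact ⟨y, hy, (Fa_div_Fa_neg_of_inner_eq hx hy hxy).symm⟩
end

section
/- Let r_{F_a} denote the supremum over x in the open unit ball B ⊂ ℝ^n (n ≥ 2) and nonzero y ∈ ℝ^n of F_a(x,y)/F_a(x,−y) (the reversibility constant of (B, F_a)). If a ∈ [0,1) then r_{F_a} = (1+a)/(1−a), while if a = 1 the supremum is +∞ (the ratios F_1(x,y)/F_1(x,−y) are unbounded on B). -/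
open Metric

/-- The set of reversibility ratios `F_a(x,y)/F_a(x,-y)` over `x` in the unit ball
and nonzero `y`. -/
def revRatios (n : ℕ) (a : ℝ) : Set ℝ :=
  {r : ℝ | ∃ x ∈ ball (0 : EuclideanSpace ℝ (Fin n)) 1,
    ∃ y : EuclideanSpace ℝ (Fin n), y ≠ 0 ∧ r = Fa n a x y / Fa n a x (-y)}

/-!
Write `t = ⟨x, y⟩` and `ρ = √(|y|² − (|x|²|y|² − t²))`. Then `F_a(x, ±y) = (ρ ± a t)/(1 − |x|²)`,
and `ρ > |t|` on the ball, so the reversibility ratio is `(1 + a u)/(1 − a u)` with `u = t/ρ`.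
Along the line `x = u e`, `y = e` (with `|e| = 1`) one gets exactly `u = t/ρ`, so `u` sweeps out
all of `(-1, 1)`. The ratio is increasing in `u`; its supremum is the limit `(1 + a)/(1 − a)` as
`u → 1`, which is infinite when `a = 1`.
-/

open Set Filter Topology

section

variable {n : ℕ} (a : ℝ)

local notation "ρ" x:max y:max => Real.sqrt (‖y‖ ^ 2 - (‖x‖ ^ 2 * ‖y‖ ^ 2 - (inner ℝ x y : ℝ) ^ 2))

theorem Fa_neg_right (x y : EuclideanSpace ℝ (Fin n)) :
    Fa n a x (-y) = (ρ x y - a * inner ℝ x y) / (1 - ‖x‖ ^ 2) := by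
  simp only [Fa, norm_neg, inner_neg_right, neg_sq, mul_neg, sub_eq_add_neg]

theorem abs_inner_lt_sqrt {x y : EuclideanSpace ℝ (Fin n)} (hx : ‖x‖ < 1) (hy : y ≠ 0) :
    |inner ℝ x y| < ρ x y := by
  have hy0 : 0 < ‖y‖ := norm_pos_iff.2 hy
  have hx0 : 0 ≤ ‖x‖ := norm_nonneg x
  rw [← Real.sqrt_sq_eq_abs]
  exact Real.sqrt_lt_sqrt (sq_nonneg _)
    (by nlinarith [mul_pos (pow_pos hy0 2) (by nlinarith : 0 < 1 - ‖x‖ ^ 2)])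

theorem Fa_smul_self {e : EuclideanSpace ℝ (Fin n)} (he : ‖e‖ = 1) (u : ℝ) :
    Fa n a (u • e) e = (1 + a * u) / (1 - u ^ 2) := by
  have hinner : inner ℝ (u • e) e = u := by
    rw [real_inner_smul_left, real_inner_self_eq_norm_sq, he]; ring
  simp only [Fa, hinner, norm_smul, he, Real.norm_eq_abs]
  norm_num

theorem revRatios_eq_image (hn : 0 < n) :
    revRatios n a = (fun u : ℝ => (1 + a * u) / (1 - a * u)) '' Ioo (-1) 1 := by
  ext r
  constructor
  · rintro ⟨x, hx, y, hy, rfl⟩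
    rw [mem_ball_zero_iff] at hx
    have hlt := abs_inner_lt_sqrt hx hy
    have hρ : 0 < ρ x y := (abs_nonneg _).trans_lt hlt
    have hd : (1 : ℝ) - ‖x‖ ^ 2 ≠ 0 := by nlinarith [norm_nonneg x]
    refine ⟨inner ℝ x y / ρ x y, abs_lt.1 (by rwa [abs_div, abs_of_pos hρ, div_lt_one hρ]), ?_⟩
    dsimp only
    rw [Fa_neg_right, Fa, div_div_div_cancel_right₀ hd, ← mul_div_mul_left _ _ hρ.ne', mul_add,
      mul_sub, mul_one, mul_left_comm, mul_div_cancel₀ _ hρ.ne']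
  · rintro ⟨u, hu, rfl⟩
    set e : EuclideanSpace ℝ (Fin n) := EuclideanSpace.single ⟨0, hn⟩ 1
    have he : ‖e‖ = 1 := by simp [e]
    have hd : (1 : ℝ) - u ^ 2 ≠ 0 := by nlinarith [hu.1, hu.2]
    refine ⟨u • e, ?_, e, norm_ne_zero_iff.1 (he ▸ one_ne_zero), ?_⟩
    · rwa [mem_ball_zero_iff, norm_smul, he, mul_one, Real.norm_eq_abs, abs_lt]
    · rw [← neg_smul_neg, Fa_smul_self a (by rwa [norm_neg]), neg_smul_neg, Fa_smul_self a he,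
        neg_sq, div_div_div_cancel_right₀ hd, mul_neg, ← sub_eq_add_neg]

end

theorem isLUB_image_Ioo {a : ℝ} (ha₀ : 0 ≤ a) (ha₁ : a < 1) :
    IsLUB ((fun u : ℝ => (1 + a * u) / (1 - a * u)) '' Ioo (-1) 1) ((1 + a) / (1 - a)) := by
  refine (isLUB_Ioo (by norm_num)).isLUB_of_tendsto ?_ (nonempty_Ioo.2 (by norm_num)) ?_
  · rintro u ⟨-, hu⟩ v ⟨-, hv⟩ huv
    rw [div_le_div_iff₀ (by nlinarith) (by nlinarith)]
    nlinarith [mul_le_mul_of_nonneg_left huv ha₀]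
  · have hcont : ContinuousAt (fun u : ℝ => (1 + a * u) / (1 - a * u)) 1 :=
      ContinuousAt.div (by fun_prop) (by fun_prop) (by rw [mul_one]; linarith)
    simpa only [mul_one] using hcont.tendsto.mono_left nhdsWithin_le_nhds

theorem not_bddAbove_image_Ioo :
    ¬ BddAbove ((fun u : ℝ => (1 + u) / (1 - u)) '' Ioo (-1) 1) := by
  rintro ⟨b, hb⟩
  obtain ⟨c, hbc, hc⟩ : ∃ c, b ≤ c ∧ 0 ≤ c := ⟨max b 0, le_max_left b 0, le_max_right b 0⟩
  have hmem : c / (c + 2) ∈ Ioo (-1 : ℝ) 1 := by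
    constructor
    · exact neg_one_lt_zero.trans_le (by positivity)
    · rw [div_lt_one (by positivity)]; linarith
  have hval : (1 + c / (c + 2)) / (1 - c / (c + 2)) = c + 1 := by
    field_simp
    ring
  have hle := hb (mem_image_of_mem _ hmem)
  rw [hval] at hle
  linarith

theorem stmt_4 (n : ℕ) (hn : 2 ≤ n) (a : ℝ) (ha : a ∈ Set.Icc (0 : ℝ) 1) :
    (a < 1 → IsLUB (revRatios n a) ((1 + a) / (1 - a))) ∧
    (a = 1 → ¬ BddAbove (revRatios n a)) := by
  rw [revRatios_eq_image a (by omega)]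
  refine ⟨isLUB_image_Ioo ha.1, ?_⟩
  rintro rfl
  simpa only [one_mul] using not_bddAbove_image_Ioo
end
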